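/- Let G be a linearly ordered abelian group and C ⊆ G a convex subgroup such that G/C is discrete, and let e ∈ G be a preimage of the minimal positive element of G/C (i.e., e > 0, e ∉ C, and for every b ∈ G with b > 0 and b ∉ C, either b − e ∈ C or e < b). Let m ∈ ℕ, k ∈ {1, …, m−1}, and x ∈ G. If x − k·e ∈ C + mG, then C = H_{m,x}. -/

import Mathlib

open Pointwise

/-- The set `nG = {n·g : g ∈ G}`. -/
def NG (G : Type*) [AddCommGroup G] (n : ℕ) : Set G :=
  {x : G | ∃ g : G, n • g = x}

/-- `H` is a convex subgroup of the linearly ordered abelian group `G`. -/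
def IsConvexSubgroup {G : Type*} [AddCommGroup G] [LinearOrder G] [IsOrderedAddMonoid G] (H : Set G) : Prop :=
  (0 : G) ∈ H ∧ (∀ x ∈ H, ∀ y ∈ H, x + y ∈ H) ∧ (∀ x ∈ H, -x ∈ H) ∧
    ∀ a ∈ H, ∀ b : G, 0 ≤ b → b ≤ a → b ∈ H

/-- `H_{n,a}`: the largest convex subgroup `H` with `a ∉ H + nG` (it is the union of
all such subgroups), and `{0}` if `a ∈ nG` (in which case the union is empty). -/
def Hna {G : Type*} [AddCommGroup G] [LinearOrder G] [IsOrderedAddMonoid G] (n : ℕ) (a : G) : Set G :=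
  {0} ∪ ⋃₀ {H : Set G | IsConvexSubgroup H ∧ a ∉ H + NG G n}

/-- `H'_{n,b} = ⋃ {H_{n,a} : a ∈ G, b ∉ H_{n,a}}`, with `{0}` for the empty union. -/
def Hnb' {G : Type*} [AddCommGroup G] [LinearOrder G] [IsOrderedAddMonoid G] (n : ℕ) (b : G) : Set G :=
  {0} ∪ ⋃₀ {H : Set G | ∃ a : G, H = Hna n a ∧ b ∉ Hna n a}

/-- `G^{[n]}_C = ⋂ {H + nG : H convex subgroup, H ⊋ C}`, with `G` for the empty
intersection. -/
def Gbr {G : Type*} [AddCommGroup G] [LinearOrder G] [IsOrderedAddMonoid G] (C : Set G) (n : ℕ) : Set G :=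
  ⋂₀ {S : Set G | ∃ H : Set G, IsConvexSubgroup H ∧ C ⊂ H ∧ S = H + NG G n}


/-! Modulo `C`, every positive element outside `C` is at least `e`. So if `k • e = c + m • g`
with `c ∈ C`, then `g` is positive and outside `C`, whence `m • e ≤ m • g ≡ k • e` modulo `C`;
by convexity `(m - k) • e ∈ C`, impossible for `0 < k < m`. Hence `x ∉ C + mG`, so
`C ⊆ H_{m,x}`. Conversely a convex subgroup `H ⊄ C` contains `C` and also `e`, hence
`x ∈ k • e + C + mG ⊆ H + mG`. -/

namespace IsConvexSubgroup

variable {G : Type*} [AddCommGroup G] [LinearOrder G] [IsOrderedAddMonoid G] {C H : Set G}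

def toAddSubgroup (hC : IsConvexSubgroup C) : AddSubgroup G where
  carrier := C
  zero_mem' := hC.1
  add_mem' ha hb := hC.2.1 _ ha _ hb
  neg_mem' := hC.2.2.1 _

lemma zero_mem (hC : IsConvexSubgroup C) : (0 : G) ∈ C := hC.1

lemma add_mem (hC : IsConvexSubgroup C) {a b : G} (ha : a ∈ C) (hb : b ∈ C) : a + b ∈ C :=
  hC.2.1 a ha b hb

lemma neg_mem (hC : IsConvexSubgroup C) {a : G} (ha : a ∈ C) : -a ∈ C := hC.2.2.1 a ha

lemma sub_mem (hC : IsConvexSubgroup C) {a b : G} (ha : a ∈ C) (hb : b ∈ C) : a - b ∈ C :=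
  show a - b ∈ hC.toAddSubgroup from hC.toAddSubgroup.sub_mem ha hb

lemma nsmul_mem (hC : IsConvexSubgroup C) {a : G} (ha : a ∈ C) (n : ℕ) : n • a ∈ C :=
  show n • a ∈ hC.toAddSubgroup from hC.toAddSubgroup.nsmul_mem ha n

lemma abs_mem_iff (hC : IsConvexSubgroup C) {a : G} : |a| ∈ C ↔ a ∈ C :=
  show |a| ∈ hC.toAddSubgroup ↔ a ∈ hC.toAddSubgroup from _root_.abs_mem_iff

lemma mem_of_nonneg_of_le (hC : IsConvexSubgroup C) {a b : G} (hb : b ∈ C) (ha : 0 ≤ a)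
    (hab : a ≤ b) : a ∈ C :=
  hC.2.2.2 b hb a ha hab

lemma mem_of_abs_le_abs (hC : IsConvexSubgroup C) {a b : G} (hb : b ∈ C) (hab : |a| ≤ |b|) :
    a ∈ C :=
  hC.abs_mem_iff.1 (hC.mem_of_nonneg_of_le (hC.abs_mem_iff.2 hb) (abs_nonneg a) hab)

lemma subset_of_not_subset (hC : IsConvexSubgroup C) (hH : IsConvexSubgroup H) (h : ¬H ⊆ C) :
    C ⊆ H := by
  obtain ⟨y, hyH, hyC⟩ := Set.not_subset.1 h
  intro c hc
  refine hH.mem_of_abs_le_abs hyH (le_of_not_ge fun hyc ↦ hyC ?_)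
  exact hC.mem_of_abs_le_abs hc hyc

lemma nsmul_notMem (hC : IsConvexSubgroup C) {e : G} (he : 0 < e) (heC : e ∉ C) {n : ℕ}
    (hn : n ≠ 0) : n • e ∉ C :=
  fun h ↦ heC (hC.mem_of_nonneg_of_le h he.le (le_self_nsmul he.le hn))

lemma sub_mem_add_NG (hC : IsConvexSubgroup C) {n : ℕ} {a b : G} (ha : a ∈ C + NG G n)
    (hb : b ∈ C + NG G n) : a - b ∈ C + NG G n := by
  obtain ⟨c, hc, _, ⟨g, rfl⟩, rfl⟩ := Set.mem_add.1 ha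
  obtain ⟨d, hd, _, ⟨h, rfl⟩, rfl⟩ := Set.mem_add.1 hb
  exact Set.mem_add.2
    ⟨c - d, hC.sub_mem hc hd, n • (g - h), ⟨g - h, rfl⟩, by rw [nsmul_sub]; abel⟩

lemma add_mem_add_NG (hC : IsConvexSubgroup C) {n : ℕ} {a b : G} (ha : a ∈ C)
    (hb : b ∈ C + NG G n) : a + b ∈ C + NG G n := by
  obtain ⟨c, hc, _, ⟨g, rfl⟩, rfl⟩ := Set.mem_add.1 hb
  exact Set.mem_add.2 ⟨a + c, hC.add_mem ha hc, n • g, ⟨g, rfl⟩, add_assoc a c _⟩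

section Discrete

variable {e : G} (he : ∀ b : G, 0 < b → b ∉ C → b - e ∈ C ∨ e < b)
include he

lemma exists_le_add_of_pos_of_notMem (hC : IsConvexSubgroup C) {b : G} (hb : 0 < b)
    (hbC : b ∉ C) : ∃ c ∈ C, e ≤ b + c := by
  rcases he b hb hbC with h | h
  · exact ⟨-(b - e), hC.neg_mem h, by simp⟩
  · exact ⟨0, hC.zero_mem, by simpa using h.le⟩

lemma mem_of_not_subset (hC : IsConvexSubgroup C) (hH : IsConvexSubgroup H) (he0 : 0 < e)
    (h : ¬H ⊆ C) : e ∈ H := by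
  obtain ⟨y, hyH, hyC⟩ := Set.not_subset.1 h
  have hy : 0 < |y| := abs_pos.2 fun hy ↦ hyC (hy ▸ hC.zero_mem)
  obtain ⟨c, hc, hle⟩ := exists_le_add_of_pos_of_notMem he hC hy (mt hC.abs_mem_iff.1 hyC)
  exact hH.mem_of_nonneg_of_le
    (hH.add_mem (hH.abs_mem_iff.2 hyH) (hC.subset_of_not_subset hH h hc)) he0.le hle

lemma nsmul_notMem_add_NG (hC : IsConvexSubgroup C) (he0 : 0 < e) (heC : e ∉ C) {k m : ℕ}
    (hk : 0 < k) (hkm : k < m) : k • e ∉ C + NG G m := by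
  intro hke
  obtain ⟨c, hc, _, ⟨g, rfl⟩, hsum⟩ := Set.mem_add.1 hke
  have hkeC : k • e ∉ C := hC.nsmul_notMem he0 heC hk.ne'
  have hgC : g ∉ C := fun hg ↦ hkeC (hsum ▸ hC.add_mem hc (hC.nsmul_mem hg m))
  have hg : 0 < g := by
    by_contra! hg
    refine hkeC (hC.mem_of_nonneg_of_le hc (nsmul_nonneg he0.le k) ?_)
    exact hsum ▸ add_le_of_nonpos_right (nsmul_nonpos hg m)
  obtain ⟨c', hc', hle⟩ := exists_le_add_of_pos_of_notMem he hC hg hgC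
  have hbound : (m - k) • e ≤ m • c' - c :=
    calc (m - k) • e = m • e - k • e := by rw [sub_nsmul e hkm.le, sub_eq_add_neg]
      _ ≤ m • (g + c') - k • e := by gcongr
      _ = m • c' - c := by rw [← hsum, nsmul_add]; abel
  exact hC.nsmul_notMem he0 heC (Nat.sub_ne_zero_of_lt hkm) <| hC.mem_of_nonneg_of_le
    (hC.sub_mem (hC.nsmul_mem hc' m) hc) (nsmul_nonneg he0.le _) hbound

end Discrete

end IsConvexSubgroup

/-- Let `C` be a convex subgroup such that `G/C` is discrete, with
`e` a preimage of the minimal positive element of `G/C`. Let `m ∈ ℕ`,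
`k ∈ {1, …, m-1}`, and `x ∈ G`. If `x - k·e ∈ C + mG`, then `C = H_{m,x}`. -/
theorem eq_Hna_of_congruent_discrete {G : Type*} [AddCommGroup G] [LinearOrder G] [IsOrderedAddMonoid G]
    (C : Set G) (hC : IsConvexSubgroup C) (e : G)
    (he1 : 0 < e) (he2 : e ∉ C)
    (he3 : ∀ b : G, 0 < b → b ∉ C → (b - e ∈ C ∨ e < b))
    (m k : ℕ) (hk1 : 1 ≤ k) (hk2 : k ≤ m - 1) (x : G)
    (hx : x - k • e ∈ C + NG G m) :
    C = Hna m x := by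
  have hxC : x ∉ C + NG G m := fun hxC ↦
    hC.nsmul_notMem_add_NG he3 he1 he2 hk1 (show k < m by omega)
      (by simpa using hC.sub_mem_add_NG hxC hx)
  refine subset_antisymm (fun c hc ↦ Or.inr ⟨C, ⟨hC, hxC⟩, hc⟩) ?_
  rintro y (rfl | ⟨H, ⟨hH, hxH⟩, hyH⟩)
  · exact hC.zero_mem
  by_contra hyC
  have hHC : ¬H ⊆ C := fun h ↦ hyC (h hyH)
  have heH : e ∈ H := hC.mem_of_not_subset he3 hH he1 hHC
  have hxH' := hH.add_mem_add_NG (hH.nsmul_mem heH k)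
    (Set.add_subset_add_right (hC.subset_of_not_subset hH hHC) hx)
  exact hxH (by simpa using hxH')
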